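/- The graph Γ_f := { (x, f(x)) : x ∈ (0,1] } of f is scale-invariant: Γ_f = {(1, 1)} ∪ ⋃_{i=0}^∞ φ_i(Γ_f), where for each non-negative integer i the map φ_i : Γ_f → ℝ² is defined by φ_i(x, y) = (δ_i(x), r_i + u_i·y), and δ_i(x) := Δ^E_{i g_1(x) g_2(x) …} is the map prepending digit i to the E-representation of x. -/

import Mathlib

/-! Prepending a digit `i` shifts the series `fSeries` by one term and multiplies what follows
by `u_i`, so `f(δ_i x) = r_i + u_i f(x)`; the rearrangement is legitimate because `|u_n| < 1`
and `u_n → 0` give `sup |u_n| < 1`, so the series converges geometrically. By uniqueness of the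
E-representation every `x ∈ (0,1]` is `δ_{g_1(x)}` of the number with digits `g_2(x) g_3(x) …`,
which gives both inclusions, and `(1, 1)` lies on the graph because `δ_0 1 = 1` turns the
functional equation into `f 1 = r_0 + u_0 f 1`. -/

open scoped BigOperators

/-- The value `Δ^E_g` of the Engel series with digit sequence `g`
(`g n` is the paper's `g_{n+1}`). -/
noncomputable def engelSum (g : ℕ → ℕ) : ℝ :=
  ∑' n : ℕ, ∏ k ∈ Finset.range (n + 1),
    ((2 : ℝ) + ∑ i ∈ Finset.range (k + 1), (g i : ℝ))⁻¹

/-- The value of the series `r_{g_1} + ∑_{k≥2} r_{g_k} ∏_{i=1}^{k-1} u_{g_i}`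
defining `f` on the digit sequence `g`. -/
noncomputable def fSeries (u r : ℕ → ℝ) (g : ℕ → ℕ) : ℝ :=
  r (g 0) + ∑' k : ℕ, r (g (k + 1)) * ∏ i ∈ Finset.range (k + 1), u (g i)

/-- `rpred r n = r (n-1)`, with the convention `r (-1) = 1`. -/
noncomputable def rpred (r : ℕ → ℝ) (n : ℕ) : ℝ := if n = 0 then 1 else r (n - 1)

open Finset

def prependDigit (i : ℕ) (g : ℕ → ℕ) : ℕ → ℕ := fun n => if n = 0 then i else g (n - 1)

@[simp] lemma prependDigit_zero (i : ℕ) (g : ℕ → ℕ) : prependDigit i g 0 = i := rfl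

@[simp] lemma prependDigit_succ (i : ℕ) (g : ℕ → ℕ) (n : ℕ) :
    prependDigit i g (n + 1) = g n := rfl

lemma prependDigit_zero_const_zero : prependDigit 0 (fun _ => 0) = fun _ => 0 := by
  funext n
  cases n <;> rfl

lemma prependDigit_head_tail (g : ℕ → ℕ) : prependDigit (g 0) (fun n => g (n + 1)) = g := by
  funext n
  cases n <;> rfl

section Engel

noncomputable def engelTerm (g : ℕ → ℕ) (n : ℕ) : ℝ :=
  ∏ k ∈ range (n + 1), ((2 : ℝ) + ∑ i ∈ range (k + 1), (g i : ℝ))⁻¹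

lemma engelSum_eq_tsum (g : ℕ → ℕ) : engelSum g = ∑' n, engelTerm g n := rfl

lemma two_le_two_add_sum (g : ℕ → ℕ) (k : ℕ) :
    (2 : ℝ) ≤ 2 + ∑ i ∈ range (k + 1), (g i : ℝ) :=
  le_add_of_nonneg_right (sum_nonneg fun i _ => Nat.cast_nonneg (g i))

lemma engelTerm_pos (g : ℕ → ℕ) (n : ℕ) : 0 < engelTerm g n :=
  prod_pos fun k _ => inv_pos.2 (two_pos.trans_le (two_le_two_add_sum g k))

lemma engelTerm_le (g : ℕ → ℕ) (n : ℕ) : engelTerm g n ≤ 2⁻¹ ^ (n + 1) :=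
  calc engelTerm g n ≤ ∏ _k ∈ range (n + 1), (2⁻¹ : ℝ) :=
        prod_le_prod (fun k _ => (inv_pos.2 (two_pos.trans_le (two_le_two_add_sum g k))).le)
          fun k _ => inv_anti₀ two_pos (two_le_two_add_sum g k)
    _ = 2⁻¹ ^ (n + 1) := by rw [prod_const, card_range]

lemma engelTerm_const_zero (n : ℕ) : engelTerm (fun _ => 0) n = 2⁻¹ ^ (n + 1) := by
  simp [engelTerm]

lemma summable_inv_two_pow_succ : Summable fun n : ℕ => (2⁻¹ : ℝ) ^ (n + 1) :=
  (summable_nat_add_iff 1).2 (summable_geometric_of_lt_one (by norm_num) (by norm_num))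

lemma tsum_inv_two_pow_succ : ∑' n : ℕ, (2⁻¹ : ℝ) ^ (n + 1) = 1 := by
  simp only [pow_succ', tsum_mul_left, tsum_geometric_inv_two]
  norm_num

lemma summable_engelTerm (g : ℕ → ℕ) : Summable (engelTerm g) :=
  summable_inv_two_pow_succ.of_nonneg_of_le (fun n => (engelTerm_pos g n).le) (engelTerm_le g)

lemma engelSum_mem_Ioc (g : ℕ → ℕ) : engelSum g ∈ Set.Ioc (0 : ℝ) 1 :=
  ⟨(summable_engelTerm g).tsum_pos (fun n => (engelTerm_pos g n).le) 0 (engelTerm_pos g 0),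
    tsum_inv_two_pow_succ ▸
      (summable_engelTerm g).tsum_le_tsum (engelTerm_le g) summable_inv_two_pow_succ⟩

lemma engelSum_const_zero : engelSum (fun _ => 0) = 1 := by
  rw [engelSum_eq_tsum, funext engelTerm_const_zero, tsum_inv_two_pow_succ]

end Engel

section Series

lemma exists_abs_le_lt_one_of_tendsto_zero {u : ℕ → ℝ}
    (hu : Filter.Tendsto u Filter.atTop (nhds 0)) (hu_abs : ∀ n, |u n| < 1) :
    ∃ c < 1, ∀ n, |u n| ≤ c := by
  obtain ⟨N, hN⟩ := Metric.tendsto_atTop.1 hu (1 / 2) (by norm_num)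
  let c := (range (N + 1)).sup' nonempty_range_add_one fun n => max (1 / 2) |u n|
  have half_le_c : (1 / 2 : ℝ) ≤ c :=
    (le_max_left _ _).trans (le_sup' (fun n => max (1 / 2) |u n|) (mem_range.2 N.succ_pos))
  refine ⟨c, sup'_lt_iff _ |>.2 fun n _ => max_lt (by norm_num) (hu_abs n), fun n => ?_⟩
  rcases lt_or_ge n (N + 1) with hn | hn
  · exact (le_max_right _ _).trans (le_sup' (fun n => max (1 / 2) |u n|) (mem_range.2 hn))
  · have := hN n (by omega)
    rw [Real.dist_eq, sub_zero] at this
    linarith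

lemma summable_mul_prod_range {a b : ℕ → ℝ} {c : ℝ} (hc : c < 1)
    (ha : ∀ k, |a k| ≤ 1) (hb : ∀ k, |b k| ≤ c) :
    Summable fun k => a k * ∏ i ∈ range k, b i := by
  have hc0 : 0 ≤ c := (abs_nonneg _).trans (hb 0)
  refine (summable_geometric_of_lt_one hc0 hc).of_norm_bounded fun k => ?_
  rw [Real.norm_eq_abs, abs_mul, abs_prod]
  calc |a k| * ∏ i ∈ range k, |b i| ≤ 1 * ∏ _i ∈ range k, c :=
        mul_le_mul (ha k) (prod_le_prod (fun i _ => abs_nonneg _) fun i _ => hb i)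
          (prod_nonneg fun i _ => abs_nonneg _) zero_le_one
    _ = c ^ k := by rw [one_mul, prod_const, card_range]

lemma prod_range_succ_prependDigit (u : ℕ → ℝ) (i : ℕ) (g : ℕ → ℕ) (k : ℕ) :
    ∏ j ∈ range (k + 1), u (prependDigit i g j) = u i * ∏ j ∈ range k, u (g j) := by
  rw [prod_range_succ', mul_comm]
  rfl

lemma fSeries_prependDigit (u r : ℕ → ℝ) (g : ℕ → ℕ) (i : ℕ)
    (hg : Summable fun k => r (g k) * ∏ j ∈ range k, u (g j)) :
    fSeries u r (prependDigit i g) = r i + u i * fSeries u r g := by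
  simp only [fSeries, prependDigit_zero, prependDigit_succ, prod_range_succ_prependDigit,
    mul_left_comm _ (u i), tsum_mul_left, hg.tsum_eq_zero_add, range_zero, prod_empty, mul_one]

end Series

theorem stmt19_general
    (u r : ℕ → ℝ)
    (hu_sum : HasSum u 1)
    (hu_abs : ∀ n, |u n| < 1)
    (hr : ∀ n, r n = 1 - ∑ i ∈ Finset.range (n + 1), u i)
    (hr01 : ∀ n, 0 < r n ∧ r n < 1)
    (G : ℝ → ℕ → ℕ)
    (hG : ∀ x ∈ Set.Ioc (0:ℝ) 1, engelSum (G x) = x)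
    (hGuniq : ∀ x ∈ Set.Ioc (0:ℝ) 1, ∀ g : ℕ → ℕ, engelSum g = x → g = G x)
    (f : ℝ → ℝ)
    (hf : ∀ x ∈ Set.Ioc (0:ℝ) 1, f x = fSeries u r (G x)) :
    {p : ℝ × ℝ | p.1 ∈ Set.Ioc (0:ℝ) 1 ∧ p.2 = f p.1}
      = {((1:ℝ), (1:ℝ))} ∪ ⋃ i : ℕ,
          (fun p : ℝ × ℝ =>
            (engelSum (fun n => if n = 0 then i else G p.1 (n - 1)),
             r i + u i * p.2)) ''
          {p : ℝ × ℝ | p.1 ∈ Set.Ioc (0:ℝ) 1 ∧ p.2 = f p.1} := by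
  obtain ⟨c, hc, hcu⟩ := exists_abs_le_lt_one_of_tendsto_zero
    hu_sum.summable.tendsto_atTop_zero hu_abs
  have hr_abs (n : ℕ) : |r n| ≤ 1 := abs_le.2 ⟨by linarith [hr01 n], (hr01 n).2.le⟩
  have G_engelSum (g : ℕ → ℕ) : G (engelSum g) = g :=
    (hGuniq _ (engelSum_mem_Ioc g) g rfl).symm
  have f_prependDigit (x : ℝ) (hx : x ∈ Set.Ioc (0 : ℝ) 1) (i : ℕ) :
      f (engelSum (prependDigit i (G x))) = r i + u i * f x := by
    rw [hf _ (engelSum_mem_Ioc _), G_engelSum, hf x hx, fSeries_prependDigit u r _ i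
      (summable_mul_prod_range hc (fun _ => hr_abs _) fun _ => hcu _)]
  have hf1 : f 1 = 1 := by
    have hG1 : G 1 = fun _ => 0 := engelSum_const_zero ▸ G_engelSum _
    have h := f_prependDigit 1 ⟨one_pos, le_rfl⟩ 0
    rw [hG1, prependDigit_zero_const_zero, engelSum_const_zero, hr 0, zero_add,
      sum_range_one] at h
    have hu0 : 1 - u 0 ≠ 0 := sub_ne_zero.2 fun h => by simpa [← h] using hu_abs 0
    have : (f 1 - 1) * (1 - u 0) = 0 := by linear_combination h
    simpa [sub_eq_zero, hu0] using this
  ext ⟨x, y⟩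
  simp only [Set.mem_ofPred_eq, Set.mem_union, Set.mem_singleton_iff, Set.mem_iUnion,
    Set.mem_image, Prod.mk.injEq, Prod.exists]
  constructor
  · rintro ⟨hx, rfl⟩
    set t := engelSum fun n => G x (n + 1)
    have hG_tail : G t = fun n => G x (n + 1) := G_engelSum _
    refine .inr ⟨G x 0, t, f t, ⟨engelSum_mem_Ioc _, rfl⟩, ?_, ?_⟩
    · change engelSum (prependDigit _ _) = x
      rw [hG_tail, prependDigit_head_tail, hG x hx]
    · rw [← f_prependDigit _ (engelSum_mem_Ioc _), hG_tail, prependDigit_head_tail, hG x hx]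
  · rintro (⟨rfl, rfl⟩ | ⟨i, q, _, ⟨hq, rfl⟩, rfl, rfl⟩)
    · exact ⟨⟨one_pos, le_rfl⟩, hf1.symm⟩
    · exact ⟨engelSum_mem_Ioc _, (f_prependDigit q hq i).symm⟩

/-- the graph of f over (0,1] is scale invariant:
Γ_f = {(1,1)} ∪ ⋃_i φ_i(Γ_f), where φ_i(x,y) = (δ_i(x), r_i + u_i·y) and δ_i
prepends the digit i to the E-representation of x. -/
theorem stmt19
    (u r : ℕ → ℝ)
    (hu_sum : HasSum u 1)
    (hu_abs : ∀ n, |u n| < 1)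
    (hr : ∀ n, r n = 1 - ∑ i ∈ Finset.range (n + 1), u i)
    (hr01 : ∀ n, 0 < r n ∧ r n < 1)
    (G : ℝ → ℕ → ℕ)
    (hG : ∀ x ∈ Set.Ioc (0:ℝ) 1, engelSum (G x) = x)
    (hGuniq : ∀ x ∈ Set.Ioc (0:ℝ) 1, ∀ g : ℕ → ℕ, engelSum g = x → g = G x)
    (f : ℝ → ℝ)
    (hf : ∀ x ∈ Set.Ioc (0:ℝ) 1, f x = fSeries u r (G x))
    (hf0 : f 0 = 0) :
    {p : ℝ × ℝ | p.1 ∈ Set.Ioc (0:ℝ) 1 ∧ p.2 = f p.1}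
      = {((1:ℝ), (1:ℝ))} ∪ ⋃ i : ℕ,
          (fun p : ℝ × ℝ =>
            (engelSum (fun n => if n = 0 then i else G p.1 (n - 1)),
             r i + u i * p.2)) ''
          {p : ℝ × ℝ | p.1 ∈ Set.Ioc (0:ℝ) 1 ∧ p.2 = f p.1} :=
  stmt19_general u r hu_sum hu_abs hr hr01 G hG hGuniq f hf
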